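/- Let ε ∼ N(0, σ_ε²) with σ_ε > 0, and let κ be a continuous random variable with strictly increasing CDF F, mean μ, standard deviation σ_κ > 0. Suppose the joint law of (κ, ε) is given by a Gaussian copula: (κ*, ε*) := (Φ⁻¹(F(κ)), ε/σ_ε) is bivariate standard normal with correlation ρ*. Then the Pearson correlation ρ between κ and ε satisfies ρ · σ_κ = ρ* · ∫ℝ ν F⁻¹(Φ(ν)) φ(ν) dν. -/

import Mathlib

open MeasureTheory ProbabilityTheory Set

noncomputable def stdphi (x : ℝ) : ℝ := Real.exp (-(x ^ 2) / 2) / Real.sqrt (2 * Real.pi)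

noncomputable def stdPhi (x : ℝ) : ℝ := ∫ t in Set.Iic x, stdphi t

noncomputable def quantile (F : ℝ → ℝ) (p : ℝ) : ℝ := sInf {x : ℝ | p ≤ F x}

noncomputable def stdPhiInv (p : ℝ) : ℝ := quantile stdPhi p

noncomputable def biphi (r k e : ℝ) : ℝ :=
  Real.exp (-((k ^ 2 - 2 * r * k * e + e ^ 2) / (2 * (1 - r ^ 2)))) /
    (2 * Real.pi * Real.sqrt (1 - r ^ 2))


open Filter Real
open scoped NNReal ENNReal


lemma stdphi_eq : stdphi = gaussianPDFReal 0 1 := by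
  funext x
  simp only [stdphi, gaussianPDFReal, NNReal.coe_one, mul_one, sub_zero]
  rw [div_eq_inv_mul]

lemma stdphi_pos (x : ℝ) : 0 < stdphi x := by
  unfold stdphi; positivity

lemma stdphi_integrable : Integrable stdphi := by
  rw [stdphi_eq]; exact integrable_gaussianPDFReal 0 1

lemma integral_stdphi : ∫ x, stdphi x = 1 := by
  rw [stdphi_eq]; exact integral_gaussianPDFReal_eq_one 0 one_ne_zero

lemma stdPhi_sub (a b : ℝ) : stdPhi b - stdPhi a = ∫ x in a..b, stdphi x :=
  intervalIntegral.integral_Iic_sub_Iic stdphi_integrable.integrableOn stdphi_integrable.integrableOn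

lemma stdPhi_strictMono : StrictMono stdPhi := by
  intro a b hab
  have h := stdPhi_sub a b
  have hpos : 0 < ∫ x in a..b, stdphi x :=
    intervalIntegral.intervalIntegral_pos_of_pos stdphi_integrable.intervalIntegrable
      (fun x => stdphi_pos x) hab
  linarith

lemma stdPhi_lipschitz (a b : ℝ) : |stdPhi b - stdPhi a| ≤ (Real.sqrt (2 * Real.pi))⁻¹ * |b - a| := by
  rw [stdPhi_sub]
  have : ∀ x ∈ Set.uIoc a b, ‖stdphi x‖ ≤ (Real.sqrt (2 * Real.pi))⁻¹ := by
    intro x _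
    rw [Real.norm_eq_abs, abs_of_pos (stdphi_pos x)]
    unfold stdphi
    rw [div_eq_mul_inv]
    have h1 : Real.exp (-(x ^ 2) / 2) ≤ 1 := by
      rw [Real.exp_le_one_iff]
      nlinarith [sq_nonneg x]
    have h2 : (0:ℝ) < (Real.sqrt (2 * Real.pi))⁻¹ := by positivity
    nlinarith
  calc |∫ x in a..b, stdphi x| = ‖∫ x in a..b, stdphi x‖ := rfl
    _ ≤ (Real.sqrt (2 * Real.pi))⁻¹ * |b - a| :=
        intervalIntegral.norm_integral_le_of_norm_le_const this

lemma stdPhi_continuous : Continuous stdPhi := by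
  have : LipschitzWith (Real.toNNReal (Real.sqrt (2 * Real.pi))⁻¹) stdPhi := by
    rw [lipschitzWith_iff_dist_le_mul]
    intro x y
    rw [Real.dist_eq, Real.dist_eq]
    have := stdPhi_lipschitz y x
    calc |stdPhi x - stdPhi y| ≤ (Real.sqrt (2 * Real.pi))⁻¹ * |x - y| := this
      _ = (Real.toNNReal (Real.sqrt (2 * Real.pi))⁻¹ : ℝ) * |x - y| := by
          rw [Real.coe_toNNReal _ (by positivity)]
  exact this.continuous

lemma stdPhi_tendsto_atTop : Tendsto stdPhi atTop (nhds 1) := by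
  have h := tendsto_setIntegral_of_monotone (ι := ℝ) (f := stdphi) (μ := volume)
    (s := fun x => Set.Iic x) (fun i => measurableSet_Iic)
    (fun i j hij => Set.Iic_subset_Iic.mpr hij)
    (by rw [Set.iUnion_Iic]; exact stdphi_integrable.integrableOn)
  rw [Set.iUnion_Iic, MeasureTheory.setIntegral_univ, integral_stdphi] at h
  exact h

lemma stdPhi_tendsto_atBot : Tendsto stdPhi atBot (nhds 0) := by
  have h := tendsto_setIntegral_of_monotone (ι := ℝ) (f := stdphi) (μ := volume)
    (s := fun x => Set.Ici (-x)) (fun i => measurableSet_Ici)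
    (fun i j hij => Set.Ici_subset_Ici.mpr (neg_le_neg hij))
    (by
      have : (⋃ x : ℝ, Set.Ici (-x)) = Set.univ := by
        apply Set.eq_univ_of_forall
        intro x
        exact Set.mem_iUnion.mpr ⟨-x, by simp⟩
      rw [this]; exact stdphi_integrable.integrableOn)
  have huniv : (⋃ x : ℝ, Set.Ici (-x)) = Set.univ := by
    apply Set.eq_univ_of_forall
    intro x
    exact Set.mem_iUnion.mpr ⟨-x, by simp⟩
  rw [huniv, MeasureTheory.setIntegral_univ, integral_stdphi] at h
  -- stdPhi x = 1 - ∫ Ici (-(-x))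
  have key : ∀ x : ℝ, stdPhi x = 1 - ∫ t in Set.Ici (-(-x)), stdphi t := by
    intro x
    have hsplit := intervalIntegral.integral_Iio_add_Ici (b := x) (μ := volume)
      stdphi_integrable.integrableOn stdphi_integrable.integrableOn
    rw [integral_stdphi] at hsplit
    have hIic : stdPhi x = ∫ t in Set.Iio x, stdphi t :=
      MeasureTheory.integral_Iic_eq_integral_Iio
    rw [neg_neg]
    linarith
  have : Tendsto (fun x : ℝ => 1 - ∫ t in Set.Ici (-(-x)), stdphi t) atBot (nhds (1 - 1)) := by
    apply Tendsto.const_sub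
    exact h.comp tendsto_neg_atBot_atTop
  rw [sub_self] at this
  exact this.congr (fun x => (key x).symm)

lemma stdphi_support : Function.support stdphi = Set.univ :=
  Set.eq_univ_of_forall (fun x => (stdphi_pos x).ne')

lemma stdPhi_pos (x : ℝ) : 0 < stdPhi x := by
  unfold stdPhi
  rw [setIntegral_pos_iff_support_of_nonneg_ae
    (ae_of_all _ (fun t => (stdphi_pos t).le)) stdphi_integrable.integrableOn]
  rw [stdphi_support, Set.univ_inter, Real.volume_Iic]
  simp

lemma stdPhi_lt_one (x : ℝ) : stdPhi x < 1 := by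
  have hsplit := intervalIntegral.integral_Iio_add_Ici (b := x) (μ := volume)
    stdphi_integrable.integrableOn stdphi_integrable.integrableOn
  rw [integral_stdphi] at hsplit
  have hIic : stdPhi x = ∫ t in Set.Iio x, stdphi t :=
    MeasureTheory.integral_Iic_eq_integral_Iio
  have hpos : 0 < ∫ t in Set.Ici x, stdphi t := by
    rw [setIntegral_pos_iff_support_of_nonneg_ae
      (ae_of_all _ (fun t => (stdphi_pos t).le)) stdphi_integrable.integrableOn]
    rw [stdphi_support, Set.univ_inter, Real.volume_Ici]
    simp
  linarith

lemma stdPhi_mem_Ioo (x : ℝ) : stdPhi x ∈ Set.Ioo (0:ℝ) 1 :=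
  ⟨stdPhi_pos x, stdPhi_lt_one x⟩

lemma exists_eq_of_tendsto {f : ℝ → ℝ} (hc : Continuous f) {c d p : ℝ}
    (h0 : Tendsto f atBot (nhds c)) (h1 : Tendsto f atTop (nhds d))
    (hp1 : c < p) (hp2 : p < d) : ∃ x, f x = p := by
  obtain ⟨a, ha⟩ := (h0.eventually (eventually_lt_nhds hp1)).exists
  obtain ⟨b, hb⟩ := (h1.eventually (eventually_gt_nhds hp2)).exists
  have : p ∈ Set.Icc (f a) (f b) := ⟨ha.le, hb.le⟩
  have hsub := intermediate_value_univ a b hc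
  obtain ⟨x, hx⟩ := hsub this
  exact ⟨x, hx⟩

lemma stdPhi_stdPhiInv {p : ℝ} (hp : p ∈ Set.Ioo (0:ℝ) 1) : stdPhi (stdPhiInv p) = p := by
  obtain ⟨x, hx⟩ := exists_eq_of_tendsto stdPhi_continuous stdPhi_tendsto_atBot
    stdPhi_tendsto_atTop hp.1 hp.2
  have hset : {y : ℝ | p ≤ stdPhi y} = Set.Ici x := by
    ext y
    simp only [Set.mem_setOf_eq, Set.mem_Ici, ← hx]
    exact stdPhi_strictMono.le_iff_le
  unfold stdPhiInv quantile
  rw [hset, csInf_Ici, hx]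

open scoped NNReal ENNReal

lemma gauss_pdf0_even (v : ℝ≥0) (x : ℝ) :
    gaussianPDFReal 0 v (-x) = gaussianPDFReal 0 v x := by
  unfold gaussianPDFReal
  rw [sub_zero, sub_zero, neg_sq]

lemma integrable_id_mul_gauss0 {v : ℝ≥0} (hv : v ≠ 0) :
    Integrable (fun x => x * gaussianPDFReal 0 v x) := by
  have hv' : (0:ℝ) < v := by exact_mod_cast pos_iff_ne_zero.mpr hv
  have hb : (0:ℝ) < (2 * (v:ℝ))⁻¹ := by positivity
  have h := (integrable_mul_exp_neg_mul_sq hb).const_mul ((Real.sqrt (2*Real.pi*(v:ℝ)))⁻¹)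
  apply h.congr
  apply ae_of_all
  intro x
  unfold gaussianPDFReal
  simp only [sub_zero]
  rw [show -x^2/(2*(v:ℝ)) = -(2*(v:ℝ))⁻¹ * x^2 by rw [div_eq_mul_inv]; ring]
  ring

lemma integral_id_mul_gauss0 {v : ℝ≥0} (hv : v ≠ 0) :
    ∫ x, x * gaussianPDFReal 0 v x = 0 := by
  have h := MeasureTheory.integral_neg_eq_self (fun x => x * gaussianPDFReal 0 v x) volume
  have heq : ∀ x : ℝ, (-x) * gaussianPDFReal 0 v (-x) = -(x * gaussianPDFReal 0 v x) := by
    intro x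
    rw [gauss_pdf0_even, neg_mul]
  simp_rw [heq] at h
  rw [integral_neg] at h
  linarith

lemma integral_id_mul_gauss {v : ℝ≥0} (hv : v ≠ 0) (m : ℝ) :
    ∫ x, x * gaussianPDFReal m v x = m := by
  have h := MeasureTheory.integral_add_right_eq_self
    (μ := volume) (fun x => x * gaussianPDFReal m v x) m
  rw [← h]
  have heq : ∀ x : ℝ, (x + m) * gaussianPDFReal m v (x + m)
      = x * gaussianPDFReal 0 v x + m * gaussianPDFReal 0 v x := by
    intro x
    rw [gaussianPDFReal_add, sub_self, add_mul]
  simp_rw [heq]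
  rw [integral_add (integrable_id_mul_gauss0 hv)
    ((integrable_gaussianPDFReal 0 v).const_mul m)]
  rw [integral_id_mul_gauss0 hv, MeasureTheory.integral_const_mul, integral_gaussianPDFReal_eq_one 0 hv]
  ring

lemma biphi_factor {ρ : ℝ} (hρ : ρ ∈ Set.Ioo (-1:ℝ) 1) (k e : ℝ) :
    biphi ρ k e = stdphi k * gaussianPDFReal (ρ * k) (Real.toNNReal (1 - ρ^2)) e := by
  have hs : 0 < 1 - ρ^2 := by nlinarith [hρ.1, hρ.2]
  unfold biphi stdphi gaussianPDFReal
  rw [Real.coe_toNNReal _ hs.le]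
  have hexp : Real.exp (-(k^2)/2) * Real.exp (-(e - ρ * k)^2/(2*(1-ρ^2)))
      = Real.exp (-((k ^ 2 - 2 * ρ * k * e + e ^ 2) / (2 * (1 - ρ ^ 2)))) := by
    rw [← Real.exp_add]
    congr 1
    field_simp
    ring
  have hc : Real.sqrt (2*Real.pi) * Real.sqrt (2*Real.pi*(1-ρ^2))
      = 2*Real.pi*Real.sqrt (1-ρ^2) := by
    have h1 : Real.sqrt (2*Real.pi*(1-ρ^2)) = Real.sqrt (2*Real.pi) * Real.sqrt (1-ρ^2) :=
      Real.sqrt_mul (by positivity) _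
    rw [h1, ← mul_assoc, Real.mul_self_sqrt (by positivity)]
  rw [inv_mul_eq_div, div_mul_div_comm, hexp, hc]

lemma biphi_pos {ρ : ℝ} (hρ : ρ ∈ Set.Ioo (-1:ℝ) 1) (k e : ℝ) : 0 < biphi ρ k e := by
  have hs : 0 < 1 - ρ^2 := by nlinarith [hρ.1, hρ.2]
  unfold biphi
  apply div_pos (Real.exp_pos _)
  exact mul_pos (by positivity) (Real.sqrt_pos.mpr hs)

lemma biphi_measurable (ρ : ℝ) : Measurable (fun p : ℝ × ℝ => biphi ρ p.1 p.2) := by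
  unfold biphi
  fun_prop

lemma integral_snd_biphi {ρ : ℝ} (hρ : ρ ∈ Set.Ioo (-1:ℝ) 1) (k : ℝ) :
    ∫ e, e * biphi ρ k e = ρ * k * stdphi k := by
  have hs : 0 < 1 - ρ^2 := by nlinarith [hρ.1, hρ.2]
  have hv : (Real.toNNReal (1-ρ^2)) ≠ 0 := by
    simp only [ne_eq, Real.toNNReal_eq_zero, not_le]
    linarith
  have heq : ∀ e : ℝ, e * biphi ρ k e
      = stdphi k * (e * gaussianPDFReal (ρ*k) (Real.toNNReal (1-ρ^2)) e) := by
    intro e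
    rw [biphi_factor hρ]
    ring
  simp_rw [heq]
  rw [MeasureTheory.integral_const_mul, integral_id_mul_gauss hv (ρ*k)]
  ring


theorem stmt_6
    {Ω : Type*} [MeasurableSpace Ω] (P : Measure Ω) [IsProbabilityMeasure P]
    (κ ε : Ω → ℝ) (hκ : Measurable κ) (hε : Measurable ε)
    (σε : ℝ) (hσε : 0 < σε)
    (hεlaw : P.map ε = gaussianReal 0 (Real.toNNReal (σε ^ 2)))
    (F Finv : ℝ → ℝ) (hF : ∀ x, F x = (P (κ ⁻¹' Set.Iic x)).toReal)
    (hFmono : StrictMono F) (hFc : Continuous F)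
    (hFinv : Function.LeftInverse Finv F)
    (μκ σκ : ℝ) (hμκ : μκ = ∫ ω, κ ω ∂P) (hσκ : σκ = Real.sqrt (variance κ P))
    (hσκpos : 0 < σκ) (hκ2 : MemLp κ 2 P)
    (ρstar : ℝ) (hρstar : ρstar ∈ Set.Ioo (-1 : ℝ) 1)
    (hjoint : P.map (fun ω => (stdPhiInv (F (κ ω)), ε ω / σε))
      = (volume : Measure (ℝ × ℝ)).withDensity
          (fun p => ENNReal.ofReal (biphi ρstar p.1 p.2)))
    (hIntprod : Integrable (fun ω => κ ω * ε ω) P) :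
    ((∫ ω, κ ω * ε ω ∂P - μκ * ∫ ω, ε ω ∂P) / (σκ * σε)) * σκ
      = ρstar * ∫ ν, ν * Finv (stdPhi ν) * stdphi ν := by
  -- F limits via cdf
  have hmapP : IsProbabilityMeasure (P.map κ) := Measure.isProbabilityMeasure_map hκ.aemeasurable
  have hFeq : F = fun x => cdf (P.map κ) x := by
    funext x
    rw [hF x, cdf_eq_real, measureReal_def, Measure.map_apply hκ measurableSet_Iic]
  have hFtop : Tendsto F atTop (nhds 1) := by
    rw [hFeq]; exact tendsto_cdf_atTop (P.map κ)
  have hFbot : Tendsto F atBot (nhds 0) := by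
    rw [hFeq]; exact tendsto_cdf_atBot (P.map κ)
  -- g = Finv ∘ stdPhi is the genuine inverse of F composed with stdPhi
  set g : ℝ → ℝ := fun k => Finv (stdPhi k) with hgdef
  have hFg : ∀ k, F (g k) = stdPhi k := by
    intro k
    obtain ⟨y, hy⟩ := exists_eq_of_tendsto hFc hFbot hFtop (stdPhi_pos k) (stdPhi_lt_one k)
    simp only [hgdef, ← hy, hFinv y]
  have hgmono : StrictMono g := by
    intro a b hab
    exact hFmono.lt_iff_lt.mp (by rw [hFg, hFg]; exact stdPhi_strictMono hab)
  have hgmeas : Measurable g := hgmono.monotone.measurable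
  -- bounds on F
  have hF0 : ∀ x, 0 ≤ F x := fun x => (hF x) ▸ ENNReal.toReal_nonneg
  have hF1 : ∀ x, F x ≤ 1 := by
    intro x
    rw [hF x]
    have h := measure_mono (Set.subset_univ (κ ⁻¹' Set.Iic x)) (μ := P)
    rw [measure_univ] at h
    exact ENNReal.toReal_le_of_le_ofReal zero_le_one (by simpa using h)
  -- a.e., F (κ ω) ∈ (0,1)
  have hN0 : P {ω | F (κ ω) = 0} = 0 := by
    by_cases hex : ∃ x0, F x0 = 0
    · obtain ⟨x0, hx0⟩ := hex
      have hsub : {ω | F (κ ω) = 0} ⊆ κ ⁻¹' Set.Iic x0 := by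
        intro ω hω
        have : F (κ ω) = F x0 := by rw [hx0]; exact hω
        have := hFmono.injective this
        simp [Set.mem_preimage, this.le]
      have hle := measure_mono hsub (μ := P)
      have : P (κ ⁻¹' Set.Iic x0) = 0 := by
        have := hF x0
        rw [hx0] at this
        exact (ENNReal.toReal_eq_zero_iff _).mp this.symm |>.resolve_right (measure_ne_top P _)
      exact le_antisymm (this ▸ hle) zero_le
    · push_neg at hex
      have : {ω | F (κ ω) = 0} = ∅ := by
        apply Set.eq_empty_of_forall_notMem
        intro ω hω
        exact hex (κ ω) hω
      rw [this, measure_empty]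
  have hN1 : P {ω | F (κ ω) = 1} = 0 := by
    by_cases hex : ∃ x1, F x1 = 1
    · obtain ⟨x1, hx1⟩ := hex
      have hIio : P (κ ⁻¹' Set.Iio x1) = 1 := by
        have hseq : Tendsto (fun n : ℕ => x1 - 1/(n+1)) atTop (nhds x1) := by
          have := tendsto_one_div_add_atTop_nhds_zero_nat (𝕜 := ℝ)
          have h2 := Tendsto.const_sub x1 this
          simpa using h2
        have htendF : Tendsto (fun n : ℕ => ENNReal.ofReal (F (x1 - 1/(n+1)))) atTop
            (nhds (ENNReal.ofReal 1)) :=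
          (ENNReal.continuous_ofReal.tendsto 1).comp (((hFc.tendsto x1).comp hseq).congr'
            (by filter_upwards with n; rfl) |>.mono_right (by rw [hx1]))
        have hle : ∀ n : ℕ, ENNReal.ofReal (F (x1 - 1/(n+1))) ≤ P (κ ⁻¹' Set.Iio x1) := by
          intro n
          rw [hF, ENNReal.ofReal_toReal (measure_ne_top _ _)]
          apply measure_mono
          apply Set.preimage_mono
          intro t ht
          simp only [Set.mem_Iic] at ht
          simp only [Set.mem_Iio]
          have : (0:ℝ) < 1/(n+1) := by positivity
          linarith
        have h1 := le_of_tendsto' htendF hle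
        rw [ENNReal.ofReal_one] at h1
        exact le_antisymm prob_le_one h1
      have hsub : {ω | F (κ ω) = 1} ⊆ (κ ⁻¹' Set.Iio x1)ᶜ := by
        intro ω hω
        have : F (κ ω) = F x1 := by rw [hx1]; exact hω
        have heq := hFmono.injective this
        simp only [Set.mem_compl_iff, Set.mem_preimage, Set.mem_Iio, not_lt, heq, le_refl]
      have hcompl : P ((κ ⁻¹' Set.Iio x1)ᶜ) = 0 := by
        rw [measure_compl (hκ measurableSet_Iio) (measure_ne_top _ _), hIio, measure_univ,
          tsub_self]
      exact le_antisymm (hcompl ▸ measure_mono hsub) zero_le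
    · push_neg at hex
      have : {ω | F (κ ω) = 1} = ∅ :=
        Set.eq_empty_of_forall_notMem (fun ω hω => hex (κ ω) hω)
      rw [this, measure_empty]
  have hae : ∀ᵐ ω ∂P, F (κ ω) ∈ Set.Ioo (0:ℝ) 1 := by
    rw [ae_iff]
    refine measure_mono_null ?_ (measure_union_null hN0 hN1)
    intro ω hω
    simp only [Set.mem_setOf_eq, Set.mem_Ioo, not_and_or, not_lt] at hω
    rcases hω with h | h
    · exact Or.inl (le_antisymm h (hF0 _))
    · exact Or.inr (le_antisymm (hF1 _) h)
  -- T is a.e. measurable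
  set T : Ω → ℝ × ℝ := fun ω => (stdPhiInv (F (κ ω)), ε ω / σε) with hTdef
  have hT : AEMeasurable T P := by
    by_contra hcon
    rw [Measure.map_of_not_aemeasurable hcon] at hjoint
    have h0 : ((volume : Measure (ℝ × ℝ)).withDensity
        (fun p => ENNReal.ofReal (biphi ρstar p.1 p.2))) Set.univ = 0 := by
      rw [← hjoint]; simp
    rw [withDensity_apply _ MeasurableSet.univ, Measure.restrict_univ,
      lintegral_eq_zero_iff (Measurable.ennreal_ofReal (biphi_measurable ρstar))] at h0
    have hne : (MeasureTheory.ae (volume : Measure (ℝ × ℝ))).NeBot := by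
      refine MeasureTheory.ae_neBot.mpr ?_
      intro hzero
      have h2 := congrArg (fun μ : Measure (ℝ × ℝ) => μ (Set.Icc 0 1 ×ˢ Set.Icc 0 1)) hzero
      simp only [Measure.volume_eq_prod, Measure.prod_prod, Real.volume_Icc,
        Measure.coe_zero, Pi.zero_apply, sub_zero, ENNReal.ofReal_one, mul_one] at h2
      exact one_ne_zero h2
    obtain ⟨p, hp⟩ := h0.exists
    rw [Pi.zero_apply, ENNReal.ofReal_eq_zero] at hp
    exact absurd hp (not_le.mpr (biphi_pos hρstar _ _))
  -- the integrand identity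
  set f : ℝ × ℝ → ℝ := fun p => g p.1 * p.2 * σε with hfdef
  have hfmeas : Measurable f := ((hgmeas.comp measurable_fst).mul measurable_snd).mul_const σε
  have haeeq : (fun ω => κ ω * ε ω) =ᵐ[P] fun ω => f (T ω) := by
    filter_upwards [hae] with ω hω
    show κ ω * ε ω = g (stdPhiInv (F (κ ω))) * (ε ω / σε) * σε
    have hg1 : g (stdPhiInv (F (κ ω))) = κ ω := by
      simp only [hgdef]
      rw [stdPhi_stdPhiInv hω, hFinv (κ ω)]
    rw [hg1]
    field_simp
  -- transfer integrability
  have h1 : Integrable (fun ω => f (T ω)) P := hIntprod.congr haeeq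
  have h2 : Integrable f (P.map T) :=
    (integrable_map_measure hfmeas.aestronglyMeasurable hT).mpr h1
  rw [hjoint] at h2
  have h4 : Integrable (fun p : ℝ × ℝ => f p * biphi ρstar p.1 p.2) volume := by
    rw [integrable_withDensity_iff (Measurable.ennreal_ofReal (biphi_measurable ρstar))
      (ae_of_all _ fun p => ENNReal.ofReal_lt_top)] at h2
    apply h2.congr
    apply ae_of_all
    intro p
    simp only []
    rw [ENNReal.toReal_ofReal (biphi_pos hρstar _ _).le]
  -- the integral computation
  have h5 : ∫ ω, κ ω * ε ω ∂P = ∫ p, f p ∂(P.map T) := by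
    rw [integral_congr_ae haeeq, integral_map hT hfmeas.aestronglyMeasurable]
  rw [hjoint] at h5
  have h6 : ∫ p, f p ∂((volume : Measure (ℝ × ℝ)).withDensity
      (fun p => ENNReal.ofReal (biphi ρstar p.1 p.2)))
      = ∫ p : ℝ × ℝ, f p * biphi ρstar p.1 p.2 := by
    have hrfl : (fun p : ℝ × ℝ => ENNReal.ofReal (biphi ρstar p.1 p.2))
        = fun p : ℝ × ℝ => ((fun q : ℝ × ℝ => Real.toNNReal (biphi ρstar q.1 q.2)) p : ℝ≥0∞) :=
      rfl
    rw [hrfl, integral_withDensity_eq_integral_smul ((biphi_measurable ρstar).real_toNNReal) f]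
    congr 1
    funext p
    rw [NNReal.smul_def, smul_eq_mul, Real.coe_toNNReal _ (biphi_pos hρstar _ _).le, mul_comm]
  have h7 : ∫ p : ℝ × ℝ, f p * biphi ρstar p.1 p.2
      = ∫ k : ℝ, ∫ e : ℝ, f (k, e) * biphi ρstar k e := by
    rw [Measure.volume_eq_prod] at h4 ⊢
    exact integral_prod _ h4
  have h8 : ∀ k : ℝ, ∫ e : ℝ, f (k, e) * biphi ρstar k e
      = (σε * ρstar) * (k * g k * stdphi k) := by
    intro k
    have heq : ∀ e : ℝ, f (k, e) * biphi ρstar k e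
        = (g k * σε) * (e * biphi ρstar k e) := by
      intro e
      simp only [hfdef]
      ring
    simp_rw [heq]
    rw [MeasureTheory.integral_const_mul, integral_snd_biphi hρstar k]
    ring
  have hI : ∫ ω, κ ω * ε ω ∂P = σε * (ρstar * ∫ ν, ν * g ν * stdphi ν) := by
    rw [h5, h6, h7]
    simp_rw [h8]
    rw [MeasureTheory.integral_const_mul, mul_assoc]
  -- E[ε] = 0
  have hvne : (Real.toNNReal (σε ^ 2)) ≠ 0 := by
    simp only [ne_eq, Real.toNNReal_eq_zero, not_le]
    positivity
  have hEε : ∫ ω, ε ω ∂P = 0 := by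
    have := integral_map hε.aemeasurable (f := fun x : ℝ => x)
      aestronglyMeasurable_id (μ := P)
    rw [hεlaw] at this
    rw [← this]
    rw [gaussianReal_of_var_ne_zero 0 hvne]
    have hrfl : gaussianPDF 0 (Real.toNNReal (σε ^ 2))
        = fun x : ℝ => ((fun y : ℝ => Real.toNNReal (gaussianPDFReal 0 (Real.toNNReal (σε ^ 2)) y)) x : ℝ≥0∞) := rfl
    rw [hrfl, integral_withDensity_eq_integral_smul
      ((measurable_gaussianPDFReal 0 _).real_toNNReal) (fun x : ℝ => x)]
    have : ∀ x : ℝ, (Real.toNNReal (gaussianPDFReal 0 (Real.toNNReal (σε ^ 2)) x)) • x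
        = x * gaussianPDFReal 0 (Real.toNNReal (σε ^ 2)) x := by
      intro x
      rw [NNReal.smul_def, smul_eq_mul, Real.coe_toNNReal _ (gaussianPDFReal_nonneg _ _ _),
        mul_comm]
    simp_rw [this]
    exact integral_id_mul_gauss0 hvne
  -- finish
  rw [hEε, mul_zero, sub_zero, hI]
  have hσκ' : σκ ≠ 0 := ne_of_gt hσκpos
  have hσε' : σε ≠ 0 := ne_of_gt hσε
  field_simp
  ring
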